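/- arXiv:1009.6140 — 6 statements merged into one kernel-verified Lean document; each statement's English description precedes it below -/
import Mathlib

section
/- Let G be a torsion-free group, C ⊆ G finite nonempty, n ≥ 1, and U an n-atom for C. Then for every g ∈ G with g ≠ 1, |U ∩ gU| ≤ n - 1. -/
/-!
If `|U ∩ gU| ≥ n`, then, since `gU` is again an `n`-fragment, Hamidoune's intersection property
gives `U ⊆ gU`, hence `gU = U`. Then `g^k u ∈ U` for every `u ∈ U` and `k : ℕ`, so the powers
of `g` cannot all be distinct: `g` has finite order.
-/

open Pointwise

/-- `V` is an `n`-fragment for `C`: `|V| ≥ n` and `|VC| - |V|` attains the minimum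
`κ_n(C) = min {|XC| - |X| : X ⊆ G finite, |X| ≥ n}`. -/
def IsNFragment {G : Type*} [Group G] [DecidableEq G] (n : ℕ) (C V : Finset G) : Prop :=
  n ≤ V.card ∧ ∀ X : Finset G, n ≤ X.card →
    ((V * C).card : ℤ) - V.card ≤ ((X * C).card : ℤ) - X.card

/-- `U` is an `n`-atom for `C`: an `n`-fragment of minimal cardinality. -/
def IsNAtom {G : Type*} [Group G] [DecidableEq G] (n : ℕ) (C U : Finset G) : Prop :=
  IsNFragment n C U ∧ ∀ V : Finset G, IsNFragment n C V → U.card ≤ V.card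

open Finset

lemma card_inter_mul_add_card_union_mul_le {α : Type*} [DecidableEq α] [Mul α]
    (U F C : Finset α) :
    ((U ∩ F) * C).card + ((U ∪ F) * C).card ≤ (U * C).card + (F * C).card := by
  have h_inter : (U ∩ F) * C ⊆ (U * C) ∩ (F * C) :=
    subset_inter (mul_subset_mul_right inter_subset_left) (mul_subset_mul_right inter_subset_right)
  calc ((U ∩ F) * C).card + ((U ∪ F) * C).card
      ≤ ((U * C) ∩ (F * C)).card + ((U * C) ∪ (F * C)).card := by
        rw [union_mul]; exact Nat.add_le_add_right (card_le_card h_inter) _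
    _ = (U * C).card + (F * C).card := card_inter_add_card_union _ _

section

variable {G : Type*} [Group G] [DecidableEq G] {n : ℕ} {C : Finset G}

namespace IsNFragment

lemma smul_finset {F : Finset G} (hF : IsNFragment n C F) (g : G) :
    IsNFragment n C (g • F) := by
  refine ⟨by rw [card_smul_finset]; exact hF.1, fun X hX => ?_⟩
  rw [smul_mul_assoc, card_smul_finset, card_smul_finset]
  exact hF.2 X hX

/-- Submodularity of `X ↦ |XC| - |X|`: both `U ∩ F` and `U ∪ F` are admissible, and the sum of
their values is at most `2 κ_n(C)`, so each attains `κ_n(C)`. -/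
lemma inter {U F : Finset G} (hU : IsNFragment n C U) (hF : IsNFragment n C F)
    (h : n ≤ (U ∩ F).card) : IsNFragment n C (U ∩ F) := by
  have h_union : n ≤ (U ∪ F).card := hU.1.trans (card_le_card subset_union_left)
  have h_sub : (((U ∩ F) * C).card : ℤ) + ((U ∪ F) * C).card ≤ (U * C).card + (F * C).card := by
    exact_mod_cast card_inter_mul_add_card_union_mul_le U F C
  have h_card : ((U ∩ F).card : ℤ) + (U ∪ F).card = U.card + F.card := by
    exact_mod_cast card_inter_add_card_union U F
  have h_le_union := hU.2 _ h_union
  have h_le_F := hF.2 U hU.1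
  refine ⟨h, fun X hX => ?_⟩
  linarith [hU.2 X hX]

end IsNFragment

lemma IsNAtom.subset_of_le_card_inter {U F : Finset G} (hU : IsNAtom n C U)
    (hF : IsNFragment n C F) (h : n ≤ (U ∩ F).card) : U ⊆ F := by
  have h_eq : U ∩ F = U :=
    eq_of_subset_of_card_le inter_subset_left (hU.2 _ (hU.1.inter hF h))
  exact h_eq ▸ inter_subset_right

lemma isOfFinOrder_of_smul_finset_eq_self {g : G} {U : Finset G} (hU : U.Nonempty)
    (h : g • U = U) : IsOfFinOrder g := by
  obtain ⟨u, hu⟩ := hU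
  have h_mem : ∀ k : ℕ, g ^ k * u ∈ U := fun k => by
    have h_pow : g ^ k • U = U := by
      induction k with
      | zero => rw [pow_zero, one_smul]
      | succ k ih => rw [pow_succ', mul_smul, ih, h]
    simpa only [h_pow, smul_eq_mul] using smul_mem_smul_finset (a := g ^ k) hu
  by_contra h_inf
  have h_inj : Function.Injective fun k : ℕ => (⟨g ^ k * u, h_mem k⟩ : U) := fun i j hij =>
    injective_pow_iff_not_isOfFinOrder.2 h_inf (mul_right_cancel (congrArg Subtype.val hij))
  exact not_injective_infinite_finite _ h_inj

end

theorem stmt1_general {G : Type*} [Group G] [DecidableEq G]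
    (hG : ∀ g : G, g ≠ 1 → ¬IsOfFinOrder g) (n : ℕ)
    (C : Finset G) (U : Finset G) (hU : IsNAtom n C U)
    (g : G) (hg : g ≠ 1) :
    (U ∩ g • U).card ≤ n - 1 := by
  by_contra! h_big
  have h_sub : U ⊆ g • U := hU.subset_of_le_card_inter (hU.1.smul_finset g) (by omega)
  have h_eq : g • U = U := (eq_of_subset_of_card_le h_sub (card_smul_finset g U).le).symm
  have h_ne : U.Nonempty := (card_pos.1 (by omega : 0 < (U ∩ g • U).card)).mono inter_subset_left
  exact hG g hg (isOfFinOrder_of_smul_finset_eq_self h_ne h_eq)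

theorem stmt1 {G : Type*} [Group G] [DecidableEq G]
    (hG : ∀ g : G, g ≠ 1 → ¬IsOfFinOrder g) (n : ℕ) (hn : 1 ≤ n)
    (C : Finset G) (hC : C.Nonempty) (U : Finset G) (hU : IsNAtom n C U)
    (g : G) (hg : g ≠ 1) :
    (U ∩ g • U).card ≤ n - 1 :=
  stmt1_general hG n C U hU g hg
end

section
/- Let G be a torsion-free group, C ⊆ G finite, n ≥ 1, and U an n-atom for C with |U| > n. Then every element of UC has at least two representations as a product uc with u ∈ U, c ∈ C. -/
/-!
If `x ∈ UC` had a single representation `uc`, removing `u` from `U` would lower `|U|` by one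
and `|UC|` by at least one (`x` is lost), so `U.erase u` would again be an `n`-fragment as long
as `|U| > n`, contradicting the minimality of the atom `U`.
-/

open Pointwise

theorem Finset.card_erase_mul_lt {G : Type*} [Mul G] [DecidableEq G] {U C : Finset G}
    {u c : G} (hu : u ∈ U) (hc : c ∈ C)
    (hunique : ∀ u' ∈ U, ∀ c' ∈ C, u' * c' = u * c → u' = u) :
    (U.erase u * C).card < (U * C).card := by
  refine Finset.card_lt_card ⟨Finset.mul_subset_mul_right (U.erase_subset u), ?_⟩
  rw [Finset.not_subset]
  refine ⟨u * c, Finset.mul_mem_mul hu hc, fun hmem => ?_⟩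
  obtain ⟨u', hu', c', hc', heq⟩ := Finset.mem_mul.mp hmem
  exact Finset.ne_of_mem_erase hu' (hunique u' (Finset.mem_of_mem_erase hu') c' hc' heq)

theorem IsNFragment.erase {G : Type*} [Group G] [DecidableEq G] {n : ℕ} {C V : Finset G}
    {u : G} (hV : IsNFragment n C V) (hu : u ∈ V) (hn : n < V.card)
    (hlt : (V.erase u * C).card < (V * C).card) : IsNFragment n C (V.erase u) := by
  have hcard := Finset.card_erase_of_mem hu
  refine ⟨by omega, fun X hX => le_trans ?_ (hV.2 X hX)⟩
  omega

theorem stmt4_general {G : Type*} [Group G] [DecidableEq G]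
    (n : ℕ)
    (C : Finset G) (U : Finset G) (hU : IsNAtom n C U) (hcard : n < U.card) :
    ∀ x ∈ U * C, ∃ u₁ ∈ U, ∃ c₁ ∈ C, ∃ u₂ ∈ U, ∃ c₂ ∈ C,
      u₁ * c₁ = x ∧ u₂ * c₂ = x ∧ (u₁, c₁) ≠ (u₂, c₂) := by
  intro x hx
  by_contra! hsingle
  obtain ⟨u, hu, c, hc, rfl⟩ := Finset.mem_mul.mp hx
  have hunique : ∀ u' ∈ U, ∀ c' ∈ C, u' * c' = u * c → u' = u := fun u' hu' c' hc' heq =>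
    congrArg Prod.fst (hsingle u' hu' c' hc' u hu c hc heq rfl)
  have hfrag := hU.1.erase hu hcard (Finset.card_erase_mul_lt hu hc hunique)
  have hmin := hU.2 _ hfrag
  rw [Finset.card_erase_of_mem hu] at hmin
  omega

theorem stmt4 {G : Type*} [Group G] [DecidableEq G]
    (hG : ∀ g : G, g ≠ 1 → ¬IsOfFinOrder g) (n : ℕ) (hn : 1 ≤ n)
    (C : Finset G) (U : Finset G) (hU : IsNAtom n C U) (hcard : n < U.card) :
    ∀ x ∈ U * C, ∃ u₁ ∈ U, ∃ c₁ ∈ C, ∃ u₂ ∈ U, ∃ c₂ ∈ C,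
      u₁ * c₁ = x ∧ u₂ * c₂ = x ∧ (u₁, c₁) ≠ (u₂, c₂) :=
  stmt4_general n C U hU hcard
end

section
/- In the Klein bottle group G₀ = ⟨u, v | u⁻¹vu = v⁻¹⟩, let A = {1, u, v} and B = {uⁱvʲ : 0 ≤ i, j ≤ m-1} for m ≥ 1. Then |B| = m² and |AB| = m² + 2m. -/
open Pointwise

/-- The single relator `u⁻¹ v u v` of the Klein bottle group
`⟨u, v ∣ u⁻¹ v u = v⁻¹⟩`, with `u = of false`, `v = of true`. -/
def kleinRels : Set (FreeGroup Bool) :=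
  {(FreeGroup.of false)⁻¹ * FreeGroup.of true * FreeGroup.of false * FreeGroup.of true}

/-- The Klein bottle group `⟨u, v ∣ u⁻¹ v u = v⁻¹⟩`. -/
abbrev KleinGroup : Type := PresentedGroup kleinRels

/-- The generator `u` of the Klein bottle group. -/
def ku : KleinGroup := PresentedGroup.of false

/-- The generator `v` of the Klein bottle group. -/
def kv : KleinGroup := PresentedGroup.of true

/-!
The permutations `u (x, y) = (x + 1, -y)` and `v (x, y) = (x, y + 1)` of `ℤ²` satisfy the defining
relation, and `uⁱ vʲ` sends the origin to `(i, (-1)ⁱ j)`; so the words `uⁱ vʲ` are pairwise distinct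
and `B` has `m²` elements. Since `v uⁱ = uⁱ v^((-1)ⁱ)`, left multiplication by `u` and `v` moves the
exponent pair `(i, j)` to `(i + 1, j)` and `(i, j + (-1)ⁱ)`. Hence the exponent pairs of `AB` are
those of the box `[0, m] × [0, m)` together with one extra point in each column `i < m`, at height
`m` for even `i` and `-1` for odd `i`: `m (m + 1) + m` points in all.
-/

def kleinPermU : Equiv.Perm (ℤ × ℤ) where
  toFun p := (p.1 + 1, -p.2)
  invFun p := (p.1 - 1, -p.2)
  left_inv p := by simp
  right_inv p := by simp

def kleinPermV : Equiv.Perm (ℤ × ℤ) where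
  toFun p := (p.1, p.2 + 1)
  invFun p := (p.1, p.2 - 1)
  left_inv p := by simp
  right_inv p := by simp

lemma kleinPermU_pow_apply (i : ℕ) (p : ℤ × ℤ) :
    (kleinPermU ^ i) p = (p.1 + i, (-1) ^ i * p.2) := by
  induction i with
  | zero => simp
  | succ i ih =>
    rw [pow_succ', Equiv.Perm.mul_apply, ih]
    simp only [kleinPermU, Equiv.coe_fn_mk, pow_succ']
    ext <;> push_cast <;> ring

lemma kleinPermV_zpow_apply (j : ℤ) (p : ℤ × ℤ) :
    (kleinPermV ^ j) p = (p.1, p.2 + j) := by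
  induction j using Int.induction_on generalizing p with
  | zero => simp
  | succ j ih =>
    rw [zpow_add_one, Equiv.Perm.mul_apply, ih]
    simp only [kleinPermV, Equiv.coe_fn_mk, Prod.mk.injEq, true_and]
    ring
  | pred j ih =>
    rw [zpow_sub_one, Equiv.Perm.mul_apply, ih]
    simp only [kleinPermV, Equiv.Perm.inv_def, Equiv.symm_mk, Equiv.coe_fn_mk, Prod.mk.injEq,
      true_and]
    ring

noncomputable def kleinToPerm : KleinGroup →* Equiv.Perm (ℤ × ℤ) :=
  PresentedGroup.toGroup (f := fun b => if b then kleinPermV else kleinPermU) <| by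
    rintro r rfl
    ext p <;> simp [kleinPermU, kleinPermV, Equiv.Perm.inv_def]

noncomputable def kleinNF (p : ℕ × ℤ) : KleinGroup := ku ^ p.1 * kv ^ p.2

lemma kleinToPerm_kleinNF_apply_zero (p : ℕ × ℤ) :
    kleinToPerm (kleinNF p) 0 = ((p.1 : ℤ), (-1) ^ p.1 * p.2) := by
  simp [kleinNF, kleinToPerm, ku, kv, kleinPermU_pow_apply, kleinPermV_zpow_apply]

lemma kleinNF_injective : Function.Injective kleinNF := by
  intro p q h
  have h' := congrArg (fun g => kleinToPerm g 0) h
  simp only [kleinToPerm_kleinNF_apply_zero, Prod.mk.injEq, Nat.cast_inj] at h'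
  obtain ⟨h1, h2⟩ := h'
  rw [h1] at h2
  exact Prod.ext h1 (mul_left_cancel₀ (pow_ne_zero _ (by norm_num)) h2)

lemma kv_mul_ku : kv * ku = ku * kv⁻¹ := by
  have h : ku⁻¹ * kv * ku * kv = 1 :=
    (QuotientGroup.eq_one_iff _).2 (Subgroup.subset_normalClosure rfl)
  calc kv * ku = ku * (ku⁻¹ * kv * ku * kv) * kv⁻¹ := by group
    _ = ku * kv⁻¹ := by rw [h, mul_one]

lemma kv_zpow_mul_ku (s : ℤ) : kv ^ s * ku = ku * kv ^ (-s) := by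
  rw [zpow_neg, ← inv_zpow]
  exact (SemiconjBy.zpow_right kv_mul_ku.symm s).symm

lemma kv_zpow_mul_ku_pow (i : ℕ) (s : ℤ) : kv ^ s * ku ^ i = ku ^ i * kv ^ ((-1) ^ i * s) := by
  induction i generalizing s with
  | zero => simp
  | succ i ih =>
    rw [pow_succ, ← mul_assoc, ih, mul_assoc, kv_zpow_mul_ku, ← mul_assoc, pow_succ]
    ring_nf

lemma ku_mul_kleinNF (p : ℕ × ℤ) : ku * kleinNF p = kleinNF (p.1 + 1, p.2) := by
  rw [kleinNF, kleinNF, ← mul_assoc, ← pow_succ']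

lemma kv_mul_kleinNF (p : ℕ × ℤ) : kv * kleinNF p = kleinNF (p.1, p.2 + (-1) ^ p.1) := by
  have := kv_zpow_mul_ku_pow p.1 1
  rw [zpow_one, mul_one] at this
  rw [kleinNF, kleinNF, ← mul_assoc, this, mul_assoc, ← zpow_add, add_comm]

lemma insert_mul_image_kleinNF (s : Set (ℕ × ℤ)) :
    ({1, ku, kv} : Set KleinGroup) * kleinNF '' s =
      kleinNF '' (s ∪ (fun p => (p.1 + 1, p.2)) '' s ∪
        (fun p => (p.1, p.2 + (-1) ^ p.1)) '' s) := by
  simp only [Set.insert_eq, Set.union_mul, Set.singleton_mul, Set.image_union, Set.image_image,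
    one_mul, ku_mul_kleinNF, kv_mul_kleinNF, Set.union_assoc]

noncomputable def kleinBox (m : ℕ) : Finset (ℕ × ℤ) :=
  Finset.range m ×ˢ Finset.Ico (0 : ℤ) m

lemma card_kleinBox (m : ℕ) : (kleinBox m).card = m ^ 2 := by
  simp [kleinBox, sq]

noncomputable def kleinProductBox (m : ℕ) : Finset (ℕ × ℤ) :=
  Finset.range (m + 1) ×ˢ Finset.Ico (0 : ℤ) m ∪
    (Finset.range m).image (fun i => (i, if Even i then (m : ℤ) else -1))

lemma setOf_pow_mul_pow_eq_image (m : ℕ) :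
    {x : KleinGroup | ∃ i < m, ∃ j < m, x = ku ^ i * kv ^ j} = kleinNF '' ↑(kleinBox m) := by
  ext x
  simp only [kleinBox, Set.mem_ofPred_eq, Set.mem_image, Finset.coe_product, Set.mem_prod,
    Finset.coe_range, Set.mem_Iio, Finset.coe_Ico, Set.mem_Ico, Prod.exists, kleinNF]
  constructor
  · rintro ⟨i, hi, j, hj, rfl⟩
    exact ⟨i, j, ⟨hi, by positivity, by exact_mod_cast hj⟩, by rw [zpow_natCast]⟩
  · rintro ⟨i, j, ⟨hi, hj0, hjm⟩, rfl⟩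
    lift j to ℕ using hj0
    exact ⟨i, hi, j, by exact_mod_cast hjm, by rw [zpow_natCast]⟩

lemma kleinBox_union_shifts_eq (m : ℕ) :
    (kleinBox m : Set (ℕ × ℤ)) ∪ (fun p : ℕ × ℤ => (p.1 + 1, p.2)) '' kleinBox m ∪
        (fun p : ℕ × ℤ => (p.1, p.2 + (-1) ^ p.1)) '' kleinBox m =
      ↑(kleinProductBox m) := by
  ext ⟨i, j⟩
  simp only [kleinBox, kleinProductBox, Finset.coe_product, Finset.coe_range, Finset.coe_Ico, Finset.coe_union,
    Finset.coe_image, Set.mem_union, Set.mem_prod, Set.mem_Iio, Set.mem_Ico, Set.mem_image,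
    Prod.exists, Prod.mk.injEq, exists_eq_right_right, existsAndEq, true_and,
    and_true, ← eq_sub_iff_add_eq, Order.lt_add_one_iff]
  rw [neg_one_pow_eq_ite]
  constructor
  · rintro ((h | ⟨a, h, rfl⟩) | h) <;> split_ifs at * <;> omega
  · rintro (h | ⟨him, hj⟩)
    · by_cases hi : i < m
      · exact .inl (.inl ⟨hi, h.2⟩)
      · exact .inl (.inr ⟨i - 1, ⟨by omega, h.2⟩, by omega⟩)
    · exact .inr ⟨him, by split_ifs at * <;> omega⟩

lemma card_kleinProductBox (m : ℕ) : (kleinProductBox m).card = m ^ 2 + 2 * m := by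
  have hdisj : Disjoint (Finset.range (m + 1) ×ˢ Finset.Ico (0 : ℤ) m)
      ((Finset.range m).image (fun i => (i, if Even i then (m : ℤ) else -1))) := by
    simp only [Finset.disjoint_left, Finset.mem_product, Finset.mem_Ico, Finset.mem_image]
    rintro ⟨i, j⟩ ⟨-, hj⟩ ⟨k, -, hk⟩
    simp only [Prod.mk.injEq] at hk
    obtain ⟨rfl, rfl⟩ := hk
    split_ifs at hj <;> omega
  rw [kleinProductBox, Finset.card_union_of_disjoint hdisj, Finset.card_product, Finset.card_image_of_injective _
    (fun a b h => congrArg Prod.fst h), Finset.card_range, Finset.card_range, Int.card_Ico]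
  simp only [sub_zero, Int.toNat_natCast]
  ring

theorem stmt13_general (m : ℕ) :
    ({x : KleinGroup | ∃ i < m, ∃ j < m, x = ku ^ i * kv ^ j} : Set KleinGroup).ncard = m ^ 2 ∧
    (({1, ku, kv} : Set KleinGroup) *
        {x : KleinGroup | ∃ i < m, ∃ j < m, x = ku ^ i * kv ^ j}).ncard = m ^ 2 + 2 * m := by
  rw [setOf_pow_mul_pow_eq_image, insert_mul_image_kleinNF, kleinBox_union_shifts_eq]
  simp only [Set.ncard_image_of_injective _ kleinNF_injective, Set.ncard_coe_finset]
  exact ⟨card_kleinBox m, card_kleinProductBox m⟩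

theorem stmt13 (m : ℕ) (hm : 1 ≤ m) :
    ({x : KleinGroup | ∃ i < m, ∃ j < m, x = ku ^ i * kv ^ j} : Set KleinGroup).ncard = m ^ 2 ∧
    (({1, ku, kv} : Set KleinGroup) *
        {x : KleinGroup | ∃ i < m, ∃ j < m, x = ku ^ i * kv ^ j}).ncard = m ^ 2 + 2 * m :=
  stmt13_general m
end

section
/- In the Klein bottle group G₀ = ⟨u, v | u⁻¹vu = v⁻¹⟩, for m ≥ 1 let A = P ∪ vuQ where P = {uⁱ : 0 ≤ i ≤ 2m} and Q = {u²ⁱ : 0 ≤ i ≤ m-1}. Then |A| = 3m + 1 and |A²| = 10m - 1. -/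
open Pointwise

/-!
The Klein bottle group is the semidirect product `ℤ ⋊ ℤ` in which `u` acts on `⟨v⟩` by inversion:
every element is uniquely `vᵖ uⁱ`, and `vᵖ uⁱ · v^q u^j = v^(p + (-1)ⁱ q) u^(i + j)`. In these
coordinates `A` consists of the points `(0, i)`, `0 ≤ i ≤ 2m`, and `(1, 2i + 1)`, `i < m`, and `A²`
is the union of three arithmetic progressions on the lines `p = 0, 1, -1`, of lengths `4m + 1`,
`4m - 1` and `2m - 1`.
-/

open Multiplicative

theorem MulAut.zpow_apply_of_apply_eq_inv {G : Type*} [Group G] {σ : MulAut G} {x : G}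
    (h : σ x = x⁻¹) (n : ℤ) : (σ ^ n) x = x ^ (n.negOnePow : ℤ) := by
  have h' : σ⁻¹ x = x⁻¹ := by rw [MulAut.inv_apply, MulEquiv.symm_apply_eq, map_inv, h, inv_inv]
  induction n using Int.induction_on with
  | zero => simp
  | succ n ih => rw [zpow_add_one, MulAut.mul_apply, h, map_inv, ih, Int.negOnePow_succ,
      Units.val_neg, zpow_neg]
  | pred n ih => rw [zpow_sub_one, MulAut.mul_apply, h', map_inv, ih, Int.negOnePow_sub,
      Int.negOnePow_one, mul_neg_one, Units.val_neg, zpow_neg]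

def negAction : Multiplicative ℤ →* MulAut (Multiplicative ℤ) := zpowersHom _ (MulEquiv.inv _)

abbrev KleinModel : Type := Multiplicative ℤ ⋊[negAction] Multiplicative ℤ

namespace KleinModel

/-- `mk p i` is `vᵖ uⁱ`. -/
def mk (p i : ℤ) : KleinModel := ⟨ofAdd p, ofAdd i⟩

theorem mk_inj {p i q j : ℤ} : mk p i = mk q j ↔ p = q ∧ i = j := by
  simp [mk, SemidirectProduct.ext_iff]

theorem mk_zero_zero : mk 0 0 = 1 := rfl

theorem negAction_apply (n k : ℤ) : negAction (ofAdd n) (ofAdd k) = ofAdd (n.negOnePow * k) := by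
  rw [negAction, zpowersHom_apply, toAdd_ofAdd,
    MulAut.zpow_apply_of_apply_eq_inv (MulEquiv.inv_apply _ _), ← ofAdd_zsmul, smul_eq_mul]

theorem mk_mul_mk (p i q j : ℤ) : mk p i * mk q j = mk (p + i.negOnePow * q) (i + j) := by
  refine SemidirectProduct.ext ?_ rfl
  show ofAdd p * negAction (ofAdd i) (ofAdd q) = ofAdd (p + i.negOnePow * q)
  rw [negAction_apply]
  rfl

theorem mk_mul_mk_of_even {i : ℤ} (hi : Even i) (p q j : ℤ) :
    mk p i * mk q j = mk (p + q) (i + j) := by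
  rw [mk_mul_mk, Int.negOnePow_even i hi, Units.val_one, one_mul]

theorem mk_mul_mk_of_odd {i : ℤ} (hi : Odd i) (p q j : ℤ) :
    mk p i * mk q j = mk (p - q) (i + j) := by
  rw [mk_mul_mk, Int.negOnePow_odd i hi, Units.val_neg, Units.val_one, neg_one_mul, sub_eq_add_neg]

theorem inv_mk_zero (i : ℤ) : (mk 0 i)⁻¹ = mk 0 (-i) := by
  rw [inv_eq_iff_mul_eq_one, mk_mul_mk]; simp [mk_zero_zero]

theorem mk_eq_inl_mul_inr (p i : ℤ) : mk p i = .inl (ofAdd p) * .inr (ofAdd i) :=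
  SemidirectProduct.mk_eq_inl_mul_inr _ _

end KleinModel

open KleinModel

theorem lift_kleinRels_eq_one :
    ∀ r ∈ kleinRels, FreeGroup.lift (fun b => if b then mk 1 0 else mk 0 1) r = 1 := by
  rintro _ rfl
  simp only [map_mul, map_inv, FreeGroup.lift_apply_of, Bool.false_eq_true, if_false, if_true]
  rw [inv_mk_zero, mk_mul_mk, mk_mul_mk, mk_mul_mk, ← mk_zero_zero, mk_inj]
  norm_num [Int.negOnePow_neg, Int.negOnePow_one]

def toModel : KleinGroup →* KleinModel := PresentedGroup.toGroup lift_kleinRels_eq_one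

theorem toModel_ku : toModel ku = mk 0 1 := PresentedGroup.toGroup.of _
theorem toModel_kv : toModel kv = mk 1 0 := PresentedGroup.toGroup.of _

theorem conj_ku_kv : MulAut.conj ku kv = kv⁻¹ := by
  have h : ku⁻¹ * kv * ku * kv = 1 := PresentedGroup.one_of_mem rfl
  have h' : ku⁻¹ * kv * ku = kv⁻¹ := mul_eq_one_iff_eq_inv.mp h
  calc ku * kv * ku⁻¹ = ku * (kv⁻¹)⁻¹ * ku⁻¹ := by rw [inv_inv]
    _ = ku * (ku⁻¹ * kv * ku)⁻¹ * ku⁻¹ := by rw [h']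
    _ = kv⁻¹ := by group

def ofModel : KleinModel →* KleinGroup :=
  SemidirectProduct.lift (zpowersHom _ kv) (zpowersHom _ ku) fun z => by
    refine MonoidHom.ext_mint ?_
    rw [MonoidHom.comp_apply, MonoidHom.comp_apply, MulEquiv.coe_toMonoidHom,
      MulEquiv.coe_toMonoidHom, zpowersHom_apply, zpowersHom_apply, zpowersHom_apply,
      ← ofAdd_toAdd z, negAction_apply]
    simp only [toAdd_ofAdd, mul_one, zpow_one, map_zpow,
      MulAut.zpow_apply_of_apply_eq_inv conj_ku_kv]

theorem ofModel_mk (p i : ℤ) : ofModel (mk p i) = kv ^ p * ku ^ i := by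
  simp [mk_eq_inl_mul_inr, ofModel]

theorem ofModel_comp_toModel : ofModel.comp toModel = MonoidHom.id KleinGroup := by
  refine PresentedGroup.ext fun b => ?_
  cases b
  · show ofModel (toModel ku) = ku
    simp [toModel_ku, ofModel_mk]
  · show ofModel (toModel kv) = kv
    simp [toModel_kv, ofModel_mk]

theorem toModel_injective : Function.Injective toModel :=
  Function.LeftInverse.injective (g := ofModel) (DFunLike.congr_fun ofModel_comp_toModel)

namespace KleinModel

theorem mk_zero_pow (i : ℤ) (n : ℕ) : mk 0 i ^ n = mk 0 (n * i) := by
  show SemidirectProduct.inr (ofAdd i) ^ n = SemidirectProduct.inr (ofAdd (n * i))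
  rw [← map_pow, ← ofAdd_nsmul, nsmul_eq_mul]

def progression (c a d : ℤ) (n : ℕ) : Set KleinModel := (fun i : ℕ => mk c (a + d * i)) '' Set.Iio n

theorem mk_mem_progression {c' t c a d : ℤ} {n : ℕ} (hc : c' = c) (i : ℕ) (hi : i < n)
    (ht : t = a + d * i) : mk c' t ∈ progression c a d n :=
  ⟨i, hi, by rw [hc, ht]⟩

theorem progression_finite (c a d : ℤ) (n : ℕ) : (progression c a d n).Finite :=
  (Set.finite_Iio n).image _

theorem ncard_progression (c a : ℤ) {d : ℤ} (hd : d ≠ 0) (n : ℕ) :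
    (progression c a d n).ncard = n := by
  rw [progression, Set.ncard_image_of_injective _ fun i j h => ?_, ← Finset.coe_range,
    Set.ncard_coe_finset, Finset.card_range]
  exact_mod_cast mul_left_cancel₀ hd (add_left_cancel (mk_inj.1 h).2)

theorem disjoint_progression {c c' : ℤ} (h : c ≠ c') (a d a' d' : ℤ) (n n' : ℕ) :
    Disjoint (progression c a d n) (progression c' a' d' n') := by
  rw [Set.disjoint_left]
  rintro _ ⟨i, -, rfl⟩ ⟨j, -, hj⟩
  exact h (mk_inj.1 hj).1.symm


def kleinSet (m : ℕ) : Set KleinModel := progression 0 0 1 (2 * m + 1) ∪ progression 1 1 2 m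

theorem ncard_kleinSet (m : ℕ) : (kleinSet m).ncard = 3 * m + 1 := by
  rw [kleinSet, Set.ncard_union_eq (disjoint_progression zero_ne_one ..) (progression_finite ..)
    (progression_finite ..), ncard_progression _ _ one_ne_zero, ncard_progression _ _ two_ne_zero]
  ring

theorem kleinSet_mul_self_subset (m : ℕ) : kleinSet m * kleinSet m ⊆
    progression 0 0 1 (4 * m + 1) ∪ progression 1 1 1 (4 * m - 1) ∪
      progression (-1) 2 2 (2 * m - 1) := by
  rintro _ ⟨_, (⟨i, hi, rfl⟩ | ⟨i, hi, rfl⟩), _, (⟨j, hj, rfl⟩ | ⟨j, hj, rfl⟩), rfl⟩ <;>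
    simp only [Set.mem_Iio] at hi hj <;> dsimp only
  · rw [mk_mul_mk, mul_zero, add_zero]
    exact .inl (.inl (mk_mem_progression rfl (i + j) (by omega) (by push_cast; ring)))
  · obtain ⟨k, rfl | rfl⟩ := Nat.even_or_odd' i
    · rw [mk_mul_mk_of_even ⟨k, by push_cast; ring⟩]
      exact .inl (.inr
        (mk_mem_progression (by ring) (2 * k + 2 * j) (by omega) (by push_cast; ring)))
    · rw [mk_mul_mk_of_odd ⟨k, by push_cast; ring⟩]
      exact .inr (mk_mem_progression (by ring) (k + j) (by omega) (by push_cast; ring))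
  · rw [mk_mul_mk_of_odd ⟨i, by ring⟩]
    exact .inl (.inr (mk_mem_progression (by ring) (2 * i + j) (by omega) (by push_cast; ring)))
  · rw [mk_mul_mk_of_odd ⟨i, by ring⟩]
    exact .inl (.inl
      (mk_mem_progression (by ring) (2 * i + 2 * j + 2) (by omega) (by push_cast; ring)))

theorem subset_kleinSet_mul_self {m : ℕ} (hm : 1 ≤ m) :
    progression 0 0 1 (4 * m + 1) ∪ progression 1 1 1 (4 * m - 1) ∪
      progression (-1) 2 2 (2 * m - 1) ⊆ kleinSet m * kleinSet m := by
  rintro _ ((⟨s, hs, rfl⟩ | ⟨t, ht, rfl⟩) | ⟨w, hw, rfl⟩) <;> rw [Set.mem_Iio] at * <;> dsimp only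
  · set i := min s (2 * m)
    refine ⟨mk 0 (i : ℕ), .inl (mk_mem_progression rfl i (by omega) (by ring)),
      mk 0 (s - i : ℕ), .inl (mk_mem_progression rfl (s - i) (by omega) (by ring)), ?_⟩
    dsimp only
    rw [mk_mul_mk, mk_inj]
    omega
  · -- `t = 2j + i` with `j < m` and `i ≤ 2m`
    set j := min (t / 2) (m - 1)
    refine ⟨mk 1 (1 + 2 * j), .inr (mk_mem_progression rfl j (by omega) rfl),
      mk 0 (t - 2 * j : ℕ), .inl (mk_mem_progression rfl (t - 2 * j) (by omega) (by ring)), ?_⟩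
    dsimp only
    rw [mk_mul_mk_of_odd ⟨j, by ring⟩, mk_inj]
    omega
  · set j := min w (m - 1)
    refine ⟨mk 0 (2 * (w - j) + 1 : ℕ),
      .inl (mk_mem_progression rfl (2 * (w - j) + 1) (by omega) (by ring)),
      mk 1 (1 + 2 * j), .inr (mk_mem_progression rfl j (by omega) rfl), ?_⟩
    dsimp only
    rw [mk_mul_mk_of_odd ⟨((w - j : ℕ) : ℤ), by push_cast; ring⟩, mk_inj]
    omega

theorem kleinSet_mul_self {m : ℕ} (hm : 1 ≤ m) : kleinSet m * kleinSet m =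
    progression 0 0 1 (4 * m + 1) ∪ progression 1 1 1 (4 * m - 1) ∪
      progression (-1) 2 2 (2 * m - 1) :=
  (kleinSet_mul_self_subset m).antisymm (subset_kleinSet_mul_self hm)

theorem ncard_kleinSet_mul_self {m : ℕ} (hm : 1 ≤ m) :
    (kleinSet m * kleinSet m).ncard = 10 * m - 1 := by
  have hdisj : Disjoint (progression 0 0 1 (4 * m + 1) ∪ progression 1 1 1 (4 * m - 1))
      (progression (-1) 2 2 (2 * m - 1)) :=
    Set.disjoint_union_left.2
      ⟨disjoint_progression (by norm_num) .., disjoint_progression (by norm_num) ..⟩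
  rw [kleinSet_mul_self hm,
    Set.ncard_union_eq hdisj ((progression_finite ..).union (progression_finite ..))
      (progression_finite ..),
    Set.ncard_union_eq (disjoint_progression one_ne_zero.symm ..) (progression_finite ..)
      (progression_finite ..),
    ncard_progression _ _ one_ne_zero, ncard_progression _ _ one_ne_zero,
    ncard_progression _ _ two_ne_zero]
  omega

end KleinModel

open KleinModel

theorem toModel_ku_pow (n : ℕ) : toModel (ku ^ n) = mk 0 n := by
  rw [map_pow, toModel_ku, mk_zero_pow, mul_one]

theorem image_toModel (m : ℕ) : toModel '' ({x | ∃ i ≤ 2 * m, x = ku ^ i} ∪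
    (fun q => kv * ku * q) '' {x | ∃ i < m, x = ku ^ (2 * i)}) = kleinSet m := by
  rw [Set.image_union, Set.image_image, kleinSet]
  congr 1
  · ext x
    simp only [Set.mem_image, Set.mem_ofPred_eq, progression, Set.mem_Iio]
    constructor
    · rintro ⟨_, ⟨i, hi, rfl⟩, rfl⟩
      exact ⟨i, by omega, by rw [toModel_ku_pow, zero_add, one_mul]⟩
    · rintro ⟨i, hi, rfl⟩
      exact ⟨_, ⟨i, by omega, rfl⟩, by rw [toModel_ku_pow, zero_add, one_mul]⟩
  · ext x
    simp only [Set.mem_image, Set.mem_ofPred_eq, progression, Set.mem_Iio]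
    have h (i : ℕ) : toModel (kv * ku * ku ^ (2 * i)) = mk 1 (1 + 2 * i) := by
      rw [map_mul, map_mul, toModel_kv, toModel_ku, toModel_ku_pow, mk_mul_mk, mk_mul_mk, mk_inj]
      push_cast
      constructor <;> ring
    constructor
    · rintro ⟨_, ⟨i, hi, rfl⟩, rfl⟩
      exact ⟨i, hi, (h i).symm⟩
    · rintro ⟨i, hi, rfl⟩
      exact ⟨_, ⟨i, hi, rfl⟩, h i⟩

theorem stmt14 (m : ℕ) (hm : 1 ≤ m)
    (P : Set KleinGroup) (hP : P = {x | ∃ i ≤ 2 * m, x = ku ^ i})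
    (Q : Set KleinGroup) (hQ : Q = {x | ∃ i < m, x = ku ^ (2 * i)})
    (A : Set KleinGroup) (hA : A = P ∪ (fun q => kv * ku * q) '' Q) :
    A.ncard = 3 * m + 1 ∧ (A * A).ncard = 10 * m - 1 := by
  subst hA hP hQ
  rw [← Set.ncard_image_of_injective _ toModel_injective,
    ← Set.ncard_image_of_injective (_ * _) toModel_injective, Set.image_mul, image_toModel]
  exact ⟨ncard_kleinSet m, ncard_kleinSet_mul_self hm⟩
end

section
/- Let G be a group, B ⊆ G a finite set, u ∈ G, and suppose |B ∪ uB| ≤ |B| + d. Then the set B_u = {x ∈ B : ux ∉ B} has |B_u| ≤ d, and B meets at most d right cosets of ⟨u⟩ (provided u has infinite order). -/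
/-!
Multiplication by `u` maps `B_u = {x ∈ B | u * x ∉ B}` bijectively onto `u • B \ B`, so
`|B_u| = |B ∪ u • B| - |B| ≤ d`. If `u` has infinite order, then on each right coset `⟨u⟩ x`
meeting `B` the finitely many exponents `n` with `u ^ n * x ∈ B` have a largest one, and
`u ^ n * x` is a point of `B_u` in that coset; hence there are at most `|B_u|` such cosets.
-/

open Pointwise

section

variable {G : Type*} [Group G]

theorem Finset.card_filter_mul_notMem_add_card [DecidableEq G] (B : Finset G) (u : G) :
    (B.filter fun x => u * x ∉ B).card + B.card = (B ∪ u • B).card := by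
  have himage : (B.filter fun x => u * x ∉ B).image (u * ·) = u • B \ B := by
    ext y
    simp only [Finset.mem_image, Finset.mem_filter, Finset.mem_sdiff, Finset.mem_smul_finset,
      smul_eq_mul]
    constructor
    · rintro ⟨x, ⟨hx, hux⟩, rfl⟩
      exact ⟨⟨x, hx, rfl⟩, hux⟩
    · rintro ⟨⟨x, hx, rfl⟩, hux⟩
      exact ⟨x, ⟨hx, hux⟩, rfl⟩
  rw [← Finset.card_image_of_injective _ (mul_right_injective u), himage,
    Finset.card_sdiff_add_card, Finset.union_comm]

theorem exists_zpow_mul_mem_mul_notMem {u : G} (hu : ¬IsOfFinOrder u) {B : Set G}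
    (hB : B.Finite) {x : G} (hx : x ∈ B) : ∃ n : ℤ, u ^ n * x ∈ B ∧ u * (u ^ n * x) ∉ B := by
  have hinj : Function.Injective fun n : ℤ => u ^ n * x :=
    (mul_left_injective x).comp (injective_zpow_iff_not_isOfFinOrder.mpr hu)
  have hfin : {n : ℤ | u ^ n * x ∈ B}.Finite := hB.preimage hinj.injOn
  obtain ⟨b, hb⟩ := hfin.bddAbove
  obtain ⟨n, hn, hmax⟩ :=
    Int.exists_greatest_of_bdd ⟨b, fun z hz => hb hz⟩ ⟨0, by simpa using hx⟩
  refine ⟨n, hn, fun hsucc => ?_⟩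
  have := hmax (1 + n) (by rwa [Set.mem_ofPred_eq, zpow_one_add, mul_assoc])
  omega

theorem ncard_image_zpowers_mul_singleton_le [DecidableEq G] {u : G} (hu : ¬IsOfFinOrder u)
    (B : Finset G) :
    ((fun x => (Subgroup.zpowers u : Set G) * {x}) '' (B : Set G)).ncard ≤
      (B.filter fun x => u * x ∉ B).card := by
  have hsubset : (fun x => (Subgroup.zpowers u : Set G) * {x}) '' (B : Set G) ⊆
      (fun x => (Subgroup.zpowers u : Set G) * {x}) '' ↑(B.filter fun x => u * x ∉ B) := by
    rintro _ ⟨x, hx, rfl⟩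
    obtain ⟨n, hn, hn'⟩ := exists_zpow_mul_mem_mul_notMem hu B.finite_toSet hx
    refine ⟨u ^ n * x, by simpa using ⟨hn, hn'⟩, ?_⟩
    dsimp only
    rw [← Set.singleton_mul_singleton, ← mul_assoc,
      Subgroup.subgroup_mul_singleton (Subgroup.zpow_mem_zpowers u n)]
  calc _ ≤ _ := Set.ncard_le_ncard hsubset ((Finset.finite_toSet _).image _)
    _ ≤ _ := Set.ncard_image_le (Finset.finite_toSet _)
    _ = _ := Set.ncard_coe_finset _

end

theorem stmt17 {G : Type*} [Group G] [DecidableEq G]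
    (B : Finset G) (u : G) (d : ℕ) (h : (B ∪ u • B).card ≤ B.card + d) :
    (B.filter fun x => u * x ∉ B).card ≤ d ∧
    (¬ IsOfFinOrder u →
      ((fun x => (Subgroup.zpowers u : Set G) * {x}) '' (B : Set G)).ncard ≤ d) := by
  have hcard : (B.filter fun x => u * x ∉ B).card ≤ d := by
    have := Finset.card_filter_mul_notMem_add_card B u
    omega
  exact ⟨hcard, fun hu => (ncard_image_zpowers_mul_singleton_le hu B).trans hcard⟩
end

section
/- Let H be a group whose center Z(H) has finite index. If H is torsion-free, then H is abelian. -/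
/-!
A commutator `⁅a, b⁆` depends only on the cosets of `a` and `b` modulo the centre, so a centre of
finite index leaves only finitely many commutators. By Schur's theorem the commutator subgroup is
then finite, and in a torsion-free group every finite subgroup is trivial.
-/

open scoped commutatorElement

/-- A monoid is torsion-free if no nontrivial elements have finite order
(the definition removed from Mathlib, restored with its old meaning). -/
def Monoid.IsTorsionFree (G : Type*) [Monoid G] : Prop :=
  ∀ g : G, g ≠ 1 → ¬IsOfFinOrder g

namespace Subgroup

variable {G : Type*} [Group G]

theorem commutatorElement_mul_left_of_mem_center {z : G} (hz : z ∈ center G) (a b : G) :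
    ⁅a * z, b⁆ = ⁅a, b⁆ := by
  rw [commutatorElement_mul_left_eq_conj_mul,
    commutatorElement_eq_one_iff_commute.2 (mem_center_iff.1 hz b).symm]
  group

theorem commutatorElement_mul_right_of_mem_center {z : G} (hz : z ∈ center G) (a b : G) :
    ⁅a, b * z⁆ = ⁅a, b⁆ := by
  rw [commutatorElement_mul_right_eq_mul_conj,
    commutatorElement_eq_one_iff_commute.2 (mem_center_iff.1 hz a)]
  group

theorem commutatorElement_out_out (a b : G) :
    ⁅(a : G ⧸ center G).out, (b : G ⧸ center G).out⁆ = ⁅a, b⁆ := by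
  obtain ⟨z, hz⟩ := QuotientGroup.mk_out_eq_mul (center G) a
  obtain ⟨w, hw⟩ := QuotientGroup.mk_out_eq_mul (center G) b
  rw [hz, hw, commutatorElement_mul_left_of_mem_center z.2,
    commutatorElement_mul_right_of_mem_center w.2]

theorem finite_commutatorSet_of_finite_quotient_center [Finite (G ⧸ center G)] :
    Finite (commutatorSet G) := by
  refine Set.Finite.to_subtype <| (Set.finite_range fun p : (G ⧸ center G) × (G ⧸ center G) =>
    ⁅p.1.out, p.2.out⁆).subset ?_
  rintro _ ⟨a, b, rfl⟩
  exact ⟨(a, b), commutatorElement_out_out a b⟩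

end Subgroup

theorem Monoid.IsTorsionFree.eq_bot_of_finite {G : Type*} [Group G] (htf : Monoid.IsTorsionFree G)
    (K : Subgroup G) [Finite K] : K = ⊥ := by
  refine (Subgroup.eq_bot_iff_forall K).2 fun x hx => ?_
  by_contra hx₁
  exact htf x hx₁ (Submonoid.isOfFinOrder_coe.2 (isOfFinOrder_of_finite (⟨x, hx⟩ : K)))

theorem stmt18 {H : Type*} [Group H]
    (hfin : Finite (H ⧸ Subgroup.center H))
    (htf : Monoid.IsTorsionFree H) :
    ∀ a b : H, a * b = b * a := by
  have : Finite (commutatorSet H) := Subgroup.finite_commutatorSet_of_finite_quotient_center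
  have : Finite (commutator H) := inferInstance
  have hbot : commutator H = ⊥ := htf.eq_bot_of_finite (commutator H)
  intro a b
  rw [← commutatorElement_eq_one_iff_mul_comm, ← Subgroup.mem_bot, ← hbot]
  exact Subgroup.commutator_mem_commutator (Subgroup.mem_top a) (Subgroup.mem_top b)
end
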